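/- Let r > 1 and s > 1 with (r²-2)s² - r² > 0. The sphere centered at (0,0,-s) with radius √(s²-1) meets each of the four spheres centered at (±r,0,0), (0,±r,0) with radius √(r²-1) at an angle γ satisfying cos γ = 1/(√(r²-1)·√(s²-1)). -/

import Mathlib

/-- A point of `ℝ³` given by its coordinates. -/
noncomputable def v3 (x y z : ℝ) : EuclideanSpace ℝ (Fin 3) :=
  (WithLp.equiv 2 (Fin 3 → ℝ)).symm ![x, y, z]

/-! At a common point `p` of spheres with centres `a`, `c` and radii `ρ`, `σ`, the law of
cosines gives `⟪p - a, c - p⟫ = (‖c - a‖² - ρ² - σ²) / 2`. Here `‖c - a‖² = r² + s²` exceeds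
`ρ² + σ² = r² + s² - 2` by exactly `2`, so the inner product is `1`. -/

open InnerProductGeometry

section InnerProductSpace

variable {V : Type*} [NormedAddCommGroup V] [InnerProductSpace ℝ V]

theorem inner_sub_sub_eq_norm_sq (a p c : V) :
    inner ℝ (p - a) (c - p) = (‖c - a‖ ^ 2 - ‖p - a‖ ^ 2 - ‖c - p‖ ^ 2) / 2 := by
  have h := norm_add_sq_real (p - a) (c - p)
  rw [sub_add_sub_cancel'] at h
  linarith

theorem cos_angle_sub_sub (a p c : V) :
    Real.cos (angle (p - a) (c - p)) =
      (‖c - a‖ ^ 2 - ‖p - a‖ ^ 2 - ‖c - p‖ ^ 2) / (2 * (‖p - a‖ * ‖c - p‖)) := by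
  rw [cos_angle, inner_sub_sub_eq_norm_sq, div_div]

end InnerProductSpace

theorem v3_sub (x y z x' y' z' : ℝ) :
    v3 x y z - v3 x' y' z' = v3 (x - x') (y - y') (z - z') := by
  ext i
  fin_cases i <;> simp [v3]

theorem norm_v3_sq (x y z : ℝ) : ‖v3 x y z‖ ^ 2 = x ^ 2 + y ^ 2 + z ^ 2 := by
  rw [EuclideanSpace.norm_eq, Real.sq_sqrt (by positivity)]
  simp [v3, Fin.sum_univ_three, sq_abs]

theorem norm_sub_v3_sq_of_mem_side_centers (r s : ℝ) {c : EuclideanSpace ℝ (Fin 3)}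
    (hc : c ∈ ({v3 r 0 0, v3 (-r) 0 0, v3 0 r 0, v3 0 (-r) 0} :
      Set (EuclideanSpace ℝ (Fin 3)))) :
    ‖c - v3 0 0 (-s)‖ ^ 2 = r ^ 2 + s ^ 2 := by
  simp only [Set.mem_insert_iff, Set.mem_singleton_iff] at hc
  rcases hc with rfl | rfl | rfl | rfl <;>
    · rw [v3_sub, norm_v3_sq]; ring

theorem base_side_angle_general (r s : ℝ) (hr : 1 < r) (hs : 1 < s) :
    ∀ c ∈ ({v3 r 0 0, v3 (-r) 0 0, v3 0 r 0, v3 0 (-r) 0} :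
        Set (EuclideanSpace ℝ (Fin 3))),
      ∀ p ∈ Metric.sphere (v3 0 0 (-s)) (Real.sqrt (s^2-1)) ∩
             Metric.sphere c (Real.sqrt (r^2-1)),
        Real.cos (InnerProductGeometry.angle (p - v3 0 0 (-s)) (c - p)) =
          1/(Real.sqrt (r^2-1) * Real.sqrt (s^2-1)) := by
  intro c hc p ⟨hp_base, hp_side⟩
  rw [Metric.mem_sphere, dist_eq_norm] at hp_base hp_side
  rw [norm_sub_rev] at hp_side
  have hr_sq : Real.sqrt (r ^ 2 - 1) ^ 2 = r ^ 2 - 1 := Real.sq_sqrt (by nlinarith)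
  have hs_sq : Real.sqrt (s ^ 2 - 1) ^ 2 = s ^ 2 - 1 := Real.sq_sqrt (by nlinarith)
  rw [cos_angle_sub_sub, norm_sub_v3_sq_of_mem_side_centers r s hc, hp_base, hp_side,
    hr_sq, hs_sq]
  field_simp
  ring

/-- Let `r > 1` and `s > 1` with `(r²-2)s² - r² > 0`. The sphere centered at `(0,0,-s)`
with radius `√(s²-1)` meets each of the four spheres centered at `(±r,0,0)`, `(0,±r,0)`
with radius `√(r²-1)` at an angle `γ` satisfying `cos γ = 1/(√(r²-1)·√(s²-1))`. -/
theorem base_side_angle (r s : ℝ) (hr : 1 < r) (hs : 1 < s)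
    (h : 0 < (r^2-2)*s^2 - r^2) :
    ∀ c ∈ ({v3 r 0 0, v3 (-r) 0 0, v3 0 r 0, v3 0 (-r) 0} :
        Set (EuclideanSpace ℝ (Fin 3))),
      ∀ p ∈ Metric.sphere (v3 0 0 (-s)) (Real.sqrt (s^2-1)) ∩
             Metric.sphere c (Real.sqrt (r^2-1)),
        Real.cos (InnerProductGeometry.angle (p - v3 0 0 (-s)) (c - p)) =
          1/(Real.sqrt (r^2-1) * Real.sqrt (s^2-1)) :=
  base_side_angle_general r s hr hs
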